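/- In the accelerated sparse PageRank algorithm (ASPR) applied to g(x) = ⟨x, Qx⟩/2 - ⟨b, x⟩ with Q a symmetric positive-definite M-matrix, the subspace minimizers x^{*,t} = argmin_{x ∈ C^{t-1}} g(x) over C^{t-1} = span{eᵢ : i ∈ S^{t-1}} ∩ ℝⁿ_{≥0} form a componentwise nondecreasing chain 0 = x^{*,0} ≤ x^{*,1} ≤ ... ≤ x^{*,T} ≤ x*, the active sets satisfy ∅ = S^{-1} ⊊ S^0 ⊊ ... ⊊ S^{T-1} = S^T ⊆ supp(x*), and the final iterate satisfies g(x^T) - g(x*) ≤ ε. -/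

import Mathlib

open Matrix

/-- The quadratic objective `g x = ⟨x, Qx⟩/2 - ⟨b, x⟩`. -/
noncomputable def quadObj {n : ℕ} (Q : Matrix (Fin n) (Fin n) ℝ) (b x : Fin n → ℝ) : ℝ :=
  (1/2) * (x ⬝ᵥ Q.mulVec x) - b ⬝ᵥ x

lemma dotQ_symm {n : ℕ} (Q : Matrix (Fin n) (Fin n) ℝ) (hQ : Q.IsSymm) (u w : Fin n → ℝ) :
    u ⬝ᵥ Q.mulVec w = w ⬝ᵥ Q.mulVec u := by
  rw [Matrix.dotProduct_mulVec, ← Matrix.mulVec_transpose, hQ.eq, dotProduct_comm]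

lemma dot_self_nonneg' {n : ℕ} (v : Fin n → ℝ) : 0 ≤ v ⬝ᵥ v :=
  Finset.sum_nonneg fun _ _ => mul_self_nonneg _

lemma dot_single_right {n : ℕ} (v : Fin n → ℝ) (i : Fin n) :
    (v ⬝ᵥ fun j => if j = i then 1 else 0) = v i := by
  simp [dotProduct]

lemma quad_expand {n : ℕ} (Q : Matrix (Fin n) (Fin n) ℝ) (hQ : Q.IsSymm) (b x y : Fin n → ℝ) :
    quadObj Q b y = quadObj Q b x + (Q.mulVec x - b) ⬝ᵥ (y - x)
      + (1/2) * ((y - x) ⬝ᵥ Q.mulVec (y - x)) := by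
  have e1 : (Q.mulVec x) ⬝ᵥ y = x ⬝ᵥ Q.mulVec y := by
    rw [dotProduct_comm]; exact dotQ_symm Q hQ y x
  have e2 : (Q.mulVec x) ⬝ᵥ x = x ⬝ᵥ Q.mulVec x := dotProduct_comm _ _
  have e3 : y ⬝ᵥ Q.mulVec x = x ⬝ᵥ Q.mulVec y := dotQ_symm Q hQ y x
  simp only [quadObj, Matrix.mulVec_sub, dotProduct_sub, sub_dotProduct]
  rw [e1, e2, e3]; ring

lemma first_order_ineq {n : ℕ} (Q : Matrix (Fin n) (Fin n) ℝ) (hQ : Q.IsSymm)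
    (hpsd : ∀ v : Fin n → ℝ, 0 ≤ v ⬝ᵥ Q.mulVec v) (b xm z : Fin n → ℝ)
    (h : ∀ θ : ℝ, 0 < θ → θ ≤ 1 →
      quadObj Q b xm ≤ quadObj Q b (fun i => xm i + θ * (z i - xm i))) :
    0 ≤ (Q.mulVec xm - b) ⬝ᵥ (z - xm) := by
  set d := z - xm with hd
  set a := (Q.mulVec xm - b) ⬝ᵥ d with ha
  set c := d ⬝ᵥ Q.mulVec d with hc
  have hc0 : 0 ≤ c := hpsd d
  have key : ∀ θ : ℝ, 0 < θ → θ ≤ 1 → 0 ≤ θ * a + θ^2 / 2 * c := by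
    intro θ h0 h1'
    have hmin := h θ h0 h1'
    have hexp := quad_expand Q hQ b xm (fun i => xm i + θ * (z i - xm i))
    have hsub : (fun i => xm i + θ * (z i - xm i)) - xm = θ • d := by
      funext i
      simp only [Pi.sub_apply, Pi.smul_apply, hd, smul_eq_mul]
      ring
    rw [hsub] at hexp
    have hdot1 : (Q.mulVec xm - b) ⬝ᵥ (θ • d) = θ * a := by
      rw [dotProduct_smul]; simp [ha, smul_eq_mul]
    have hdot2 : (θ • d) ⬝ᵥ Q.mulVec (θ • d) = θ^2 * c := by
      rw [Matrix.mulVec_smul, dotProduct_smul, smul_dotProduct]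
      simp only [smul_eq_mul]
      rw [← hc]; ring
    rw [hdot1, hdot2] at hexp
    nlinarith [hmin, hexp]
  by_contra hneg
  push_neg at hneg
  rcases eq_or_lt_of_le hc0 with hc0' | hcpos
  · have := key 1 one_pos le_rfl
    nlinarith
  · set θ0 := min 1 (-a / c) with hθ0
    have hθpos : 0 < θ0 := lt_min one_pos (div_pos (by linarith) hcpos)
    have hθle : θ0 ≤ 1 := min_le_left _ _
    have hθc : θ0 * c ≤ -a := by
      have h2 : θ0 ≤ -a / c := min_le_right _ _
      calc θ0 * c ≤ (-a / c) * c := by nlinarith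
        _ = -a := by field_simp
    have := key θ0 hθpos hθle
    nlinarith

lemma opnorm_sq {n : ℕ} (Q : Matrix (Fin n) (Fin n) ℝ) (hQ : Q.IsSymm) (L : ℝ) (hL : 0 < L)
    (hpsd : ∀ v : Fin n → ℝ, 0 ≤ v ⬝ᵥ Q.mulVec v)
    (hup : ∀ v : Fin n → ℝ, v ⬝ᵥ Q.mulVec v ≤ L * (v ⬝ᵥ v)) (u : Fin n → ℝ) :
    (Q.mulVec u) ⬝ᵥ (Q.mulVec u) ≤ L^2 * (u ⬝ᵥ u) := by
  set w := Q.mulVec u with hw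
  have hkey := hpsd (w - L • u)
  have hexp : (w - L • u) ⬝ᵥ Q.mulVec (w - L • u)
      = w ⬝ᵥ Q.mulVec w - 2 * L * (w ⬝ᵥ w) + L^2 * (u ⬝ᵥ Q.mulVec u) := by
    have e1 : w ⬝ᵥ Q.mulVec u = w ⬝ᵥ w := rfl
    have e2 : u ⬝ᵥ Q.mulVec w = w ⬝ᵥ w := by rw [dotQ_symm Q hQ]
    simp only [Matrix.mulVec_sub, Matrix.mulVec_smul, dotProduct_sub, sub_dotProduct,
      dotProduct_smul, smul_dotProduct]
    simp only [smul_eq_mul]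
    rw [e1, e2]; ring
  rw [hexp] at hkey
  have h1 : w ⬝ᵥ Q.mulVec w ≤ L * (w ⬝ᵥ w) := hup w
  have h2 : u ⬝ᵥ Q.mulVec u ≤ L * (u ⬝ᵥ u) := hup u
  nlinarith [hkey, h1, h2, hL]

lemma min_max_mono {n : ℕ} (Q : Matrix (Fin n) (Fin n) ℝ) (hQ : Q.IsSymm)
    (hQpd : Q.PosDef) (hM : ∀ i j : Fin n, i ≠ j → Q i j ≤ 0)
    (b u v : Fin n → ℝ)
    (h1 : quadObj Q b u ≤ quadObj Q b (fun i => min (u i) (v i)))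
    (_h2 : quadObj Q b v ≤ quadObj Q b (fun i => max (u i) (v i)))
    (h3 : quadObj Q b v ≤ quadObj Q b (fun i => (max (u i) (v i) + v i)/2)) :
    ∀ i, u i ≤ v i := by
  classical
  set p : Fin n → ℝ := fun i => max (u i) (v i) - u i with hp
  set q : Fin n → ℝ := fun i => u i - min (u i) (v i) with hq
  have hpn : ∀ i, 0 ≤ p i := fun i => by simp [hp, le_max_left]
  have hqn : ∀ i, 0 ≤ q i := fun i => by simp [hq, min_le_left]
  have hA := quad_expand Q hQ b u (fun i => max (u i) (v i))
  have hB := quad_expand Q hQ b v (fun i => min (u i) (v i))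
  have hpe : (fun i => max (u i) (v i)) - u = p := by funext i; simp [hp]
  have hme : (fun i => min (u i) (v i)) - v = -p := by
    funext i
    simp only [Pi.sub_apply, Pi.neg_apply, hp]
    rcases le_total (u i) (v i) with h | h
    · rw [min_eq_left h, max_eq_right h]; ring
    · rw [min_eq_right h, max_eq_left h]; ring
  rw [hpe] at hA
  rw [hme] at hB
  have hnegp : (-p) ⬝ᵥ Q.mulVec (-p) = p ⬝ᵥ Q.mulVec p := by
    simp [Matrix.mulVec_neg, dotProduct_neg, neg_dotProduct]
  rw [hnegp] at hB
  rw [dotProduct_neg] at hB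
  have hcross : (Q.mulVec u - b) ⬝ᵥ p - (Q.mulVec v - b) ⬝ᵥ p + p ⬝ᵥ Q.mulVec p ≤ 0 := by
    have e0 : (Q.mulVec u - b) ⬝ᵥ p - (Q.mulVec v - b) ⬝ᵥ p + p ⬝ᵥ Q.mulVec p
        = p ⬝ᵥ Q.mulVec q := by
      have euv : u - v = q - p := by
        funext i
        simp only [Pi.sub_apply, hp, hq]
        rcases le_total (u i) (v i) with h | h
        · rw [min_eq_left h, max_eq_right h]; ring
        · rw [min_eq_right h, max_eq_left h]; ring
      have e1 : (Q.mulVec u - b) ⬝ᵥ p - (Q.mulVec v - b) ⬝ᵥ p = (Q.mulVec (u - v)) ⬝ᵥ p := by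
        simp only [Matrix.mulVec_sub, sub_dotProduct]
        ring
      rw [e1, euv]
      rw [show (Q.mulVec (q - p)) ⬝ᵥ p = p ⬝ᵥ Q.mulVec (q - p) from dotProduct_comm _ _]
      simp only [Matrix.mulVec_sub, dotProduct_sub]
      ring
    rw [e0]
    have e1 : p ⬝ᵥ Q.mulVec q = ∑ i, ∑ j, p i * (Q i j * q j) := by
      simp only [dotProduct, Matrix.mulVec, dotProduct, Finset.mul_sum]
    rw [e1]
    apply Finset.sum_nonpos
    intro i _
    apply Finset.sum_nonpos
    intro j _
    rcases eq_or_ne i j with rfl | hij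
    · rcases le_total (u i) (v i) with h | h
      · have hz : q i = 0 := by simp [hq, min_eq_left h]
        simp [hz]
      · have hz : p i = 0 := by simp [hp, max_eq_left h]
        simp [hz]
    · have hQij := hM i j hij
      nlinarith [mul_nonneg (mul_nonneg (hpn i) (hqn j)) (neg_nonneg.mpr hQij)]
  have hmaxle : quadObj Q b (fun i => max (u i) (v i)) ≤ quadObj Q b v := by
    linarith [hA, hB, h1, hcross]
  set p' : Fin n → ℝ := (fun i => max (u i) (v i)) - v with hp'
  have hmid := quad_expand Q hQ b v (fun i => (max (u i) (v i) + v i)/2)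
  have hmax := quad_expand Q hQ b v (fun i => max (u i) (v i))
  rw [show (fun i => max (u i) (v i)) - v = p' from rfl] at hmax
  have hmide : (fun i => (max (u i) (v i) + v i)/2) - v = (1/2 : ℝ) • p' := by
    funext i
    simp only [Pi.sub_apply, Pi.smul_apply, hp', smul_eq_mul, Pi.sub_apply]
    ring
  rw [hmide] at hmid
  have hd1 : (Q.mulVec v - b) ⬝ᵥ ((1/2 : ℝ) • p') = (1/2) * ((Q.mulVec v - b) ⬝ᵥ p') := by
    rw [dotProduct_smul]; simp [smul_eq_mul]
  have hd2 : ((1/2 : ℝ) • p') ⬝ᵥ Q.mulVec ((1/2 : ℝ) • p') = (1/4) * (p' ⬝ᵥ Q.mulVec p') := by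
    rw [Matrix.mulVec_smul, dotProduct_smul, smul_dotProduct]
    simp only [smul_eq_mul]; ring
  rw [hd1, hd2] at hmid
  have hp'eq : p' = 0 := by
    by_contra h
    have hpos : 0 < p' ⬝ᵥ Q.mulVec p' := by simpa using hQpd.dotProduct_mulVec_pos h
    nlinarith [hmid, hmax, h3, hmaxle, hpos]
  intro i
  have hzi := congrFun hp'eq i
  simp only [hp', Pi.sub_apply, Pi.zero_apply] at hzi
  have hmaxeq : max (u i) (v i) = v i := by linarith [hzi]
  exact max_eq_right_iff.mp hmaxeq

set_option maxHeartbeats 1600000 in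
/-- Theorem 6 on ASPR. The index is shifted so that `S t` denotes the
paper's `S^{t-1}` (hence `S 0 = S^{-1} = ∅` and `S (t+1) = S^t`), and `xs t` is the
minimizer `x^{*,t}` of `g` over `C^{t-1} = span{eᵢ : i ∈ S^{t-1}} ∩ ℝⁿ₊`.
At stage `t < T`, the APGD subroutine produces `x̄^{t+1} ∈ C^t` with
`g(x̄^{t+1}) - g(x^{*,t+1}) ≤ ε̂_t` where `ε̂_t = εα²/(2(1+|Sᵗ|)L²)`, the iterate is
retracted by `δ_t = √(εα/((1+|Sᵗ|)L²))`, and `S^{t+1} = S^t ∪ {i : ∇ᵢg(x^{t+1}) < 0}`;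
`T` is the first iteration with `S^T = S^{T-1}`. Conclusions: the chain
`0 = x^{*,0} ≤ x^{*,1} ≤ ⋯ ≤ x^{*,T} ≤ x*`, strict growth of the active sets
`S^{t-1} ⊊ S^t` for `t ≤ T-1` with `S^T ⊆ supp(x*)`, and `g(x^T) - g(x*) ≤ ε`. -/
theorem stmt_17 (n : ℕ) (Q : Matrix (Fin n) (Fin n) ℝ) (b : Fin n → ℝ)
    (hQsymm : Q.IsSymm) (hQpd : Q.PosDef)
    (hM : ∀ i j : Fin n, i ≠ j → Q i j ≤ 0)
    (α L ε : ℝ) (hα : 0 < α) (hαL : α ≤ L) (hε : 0 < ε)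
    (hlow : ∀ v : Fin n → ℝ, α * (v ⬝ᵥ v) ≤ v ⬝ᵥ Q.mulVec v)
    (hup : ∀ v : Fin n → ℝ, v ⬝ᵥ Q.mulVec v ≤ L * (v ⬝ᵥ v))
    (T : ℕ) (S : ℕ → Finset (Fin n)) (x xbar xs : ℕ → Fin n → ℝ)
    (δ εhat : ℕ → ℝ)
    (hx0 : x 0 = 0)
    (hS0 : S 0 = ∅)
    (hSsucc : ∀ t ≤ T, S (t+1) =
      S t ∪ Finset.univ.filter (fun i => (Q.mulVec (x t) - b) i < 0))
    (hxs : ∀ t ≤ T, ((∀ i, 0 ≤ xs t i) ∧ ∀ i ∉ S t, xs t i = 0) ∧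
      ∀ z : Fin n → ℝ, ((∀ i, 0 ≤ z i) ∧ ∀ i ∉ S t, z i = 0) →
        quadObj Q b (xs t) ≤ quadObj Q b z)
    (hδ : ∀ t, δ t = Real.sqrt (ε * α / ((1 + (S (t+1)).card) * L ^ 2)))
    (hεhat : ∀ t, εhat t = ε * α ^ 2 / (2 * (1 + (S (t+1)).card) * L ^ 2))
    (hxbar : ∀ t < T, ((∀ i, 0 ≤ xbar (t+1) i) ∧ ∀ i ∉ S (t+1), xbar (t+1) i = 0) ∧
      quadObj Q b (xbar (t+1)) - quadObj Q b (xs (t+1)) ≤ εhat t)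
    (hxsucc : ∀ t < T, ∀ i, x (t+1) i = max 0 (xbar (t+1) i - δ t))
    (hTfirst : S (T+1) = S T ∧ ∀ t < T, S (t+1) ≠ S t)
    (xstar : Fin n → ℝ)
    (hxstarmem : ∀ i, 0 ≤ xstar i)
    (hxstarmin : ∀ z : Fin n → ℝ, (∀ i, 0 ≤ z i) →
      quadObj Q b xstar ≤ quadObj Q b z) :
    (xs 0 = 0 ∧ (∀ t < T, ∀ i, xs t i ≤ xs (t+1) i) ∧ (∀ i, xs T i ≤ xstar i)) ∧
    ((∀ t < T, S t ⊂ S (t+1)) ∧ ∀ i ∈ S (T+1), 0 < xstar i) ∧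
    quadObj Q b (x T) - quadObj Q b xstar ≤ ε := by
  classical
  have hL : 0 < L := lt_of_lt_of_le hα hαL
  have hpsd : ∀ v : Fin n → ℝ, 0 ≤ v ⬝ᵥ Q.mulVec v := fun v =>
    le_trans (mul_nonneg hα.le (dot_self_nonneg' v)) (hlow v)
  -- first-order optimality at xs t
  have hfo : ∀ t, t ≤ T → ∀ z : Fin n → ℝ, ((∀ i, 0 ≤ z i) ∧ ∀ i ∉ S t, z i = 0) →
      0 ≤ (Q.mulVec (xs t) - b) ⬝ᵥ (z - xs t) := by
    intro t ht z hz
    apply first_order_ineq Q hQsymm hpsd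
    intro θ h0 h1
    apply (hxs t ht).2
    constructor
    · intro i
      nlinarith [(hxs t ht).1.1 i, hz.1 i]
    · intro i hi
      rw [(hxs t ht).1.2 i hi, hz.2 i hi]; ring
  have hfostar : ∀ z : Fin n → ℝ, (∀ i, 0 ≤ z i) →
      0 ≤ (Q.mulVec xstar - b) ⬝ᵥ (z - xstar) := by
    intro z hz
    apply first_order_ineq Q hQsymm hpsd
    intro θ h0 h1
    apply hxstarmin
    intro i
    nlinarith [hxstarmem i, hz i]
  -- gradient coordinates
  have hgradstar : ∀ i, 0 ≤ (Q.mulVec xstar - b) i := by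
    intro i
    have hz : ∀ j, 0 ≤ xstar j + if j = i then (1:ℝ) else 0 := by
      intro j
      have : (0:ℝ) ≤ if j = i then (1:ℝ) else 0 := by split <;> norm_num
      linarith [hxstarmem j]
    have h := hfostar (fun j => xstar j + if j = i then (1:ℝ) else 0) hz
    have hzz : (fun j => xstar j + if j = i then (1:ℝ) else 0) - xstar
        = fun j => if j = i then (1:ℝ) else 0 := by
      funext j; simp
    rw [hzz, dot_single_right] at h
    exact h
  have hgradxs : ∀ t, t ≤ T → ∀ i ∈ S t, 0 ≤ (Q.mulVec (xs t) - b) i := by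
    intro t ht i hiS
    have hz : ((∀ j, 0 ≤ xs t j + if j = i then (1:ℝ) else 0) ∧
        ∀ j ∉ S t, xs t j + (if j = i then (1:ℝ) else 0) = 0) := by
      constructor
      · intro j
        have : (0:ℝ) ≤ if j = i then (1:ℝ) else 0 := by split <;> norm_num
        linarith [(hxs t ht).1.1 j]
      · intro j hj
        have hji : j ≠ i := fun h => hj (h ▸ hiS)
        rw [(hxs t ht).1.2 j hj, if_neg hji]; ring
    have h := hfo t ht (fun j => xs t j + if j = i then (1:ℝ) else 0) hz
    have hzz : (fun j => xs t j + if j = i then (1:ℝ) else 0) - xs t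
        = fun j => if j = i then (1:ℝ) else 0 := by
      funext j; simp
    rw [hzz, dot_single_right] at h
    exact h
  -- set chain
  have hSsub : ∀ t, t ≤ T → S t ⊆ S (t+1) := by
    intro t ht
    rw [hSsucc t ht]
    exact Finset.subset_union_left
  have hxs0 : xs 0 = 0 := by
    funext i
    exact (hxs 0 (Nat.zero_le _)).1.2 i (by simp [hS0])
  -- monotone step
  have hstep : ∀ t < T, ∀ i, xs t i ≤ xs (t+1) i := by
    intro t ht
    have ht1 : t ≤ T := ht.le
    have ht2 : t + 1 ≤ T := ht
    have hu := (hxs t ht1).1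
    have hv := (hxs (t+1) ht2).1
    apply min_max_mono Q hQsymm hQpd hM b
    · apply (hxs t ht1).2
      refine ⟨fun i => le_min (hu.1 i) (hv.1 i), fun i hi => ?_⟩
      rw [hu.2 i hi]
      exact min_eq_left (hv.1 i)
    · apply (hxs (t+1) ht2).2
      refine ⟨fun i => le_trans (hu.1 i) (le_max_left _ _), fun i hi => ?_⟩
      have hi' : i ∉ S t := fun h => hi (hSsub t ht1 h)
      rw [hu.2 i hi', hv.2 i hi]; simp
    · apply (hxs (t+1) ht2).2
      refine ⟨fun i => div_nonneg (add_nonneg (le_trans (hv.1 i) (le_max_right _ _)) (hv.1 i))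
        (by norm_num), fun i hi => ?_⟩
      have hi' : i ∉ S t := fun h => hi (hSsub t ht1 h)
      rw [hu.2 i hi', hv.2 i hi]; norm_num
  -- last step of the chain
  have hlast : ∀ i, xs T i ≤ xstar i := by
    have hu := (hxs T le_rfl).1
    apply min_max_mono Q hQsymm hQpd hM b
    · apply (hxs T le_rfl).2
      refine ⟨fun i => le_min (hu.1 i) (hxstarmem i), fun i hi => ?_⟩
      rw [hu.2 i hi]
      exact min_eq_left (hxstarmem i)
    · exact hxstarmin _ (fun i => le_trans (hu.1 i) (le_max_left _ _))
    · exact hxstarmin _ (fun i => div_nonneg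
        (add_nonneg (le_trans (hxstarmem i) (le_max_right _ _)) (hxstarmem i)) (by norm_num))
  -- full chain
  have hchain : ∀ t, t ≤ T → ∀ s, s ≤ t → ∀ i, xs s i ≤ xs t i := by
    intro t
    induction t with
    | zero =>
      intro _ s hs i
      rw [Nat.le_zero.mp hs]
    | succ t ih =>
      intro ht s hs i
      rcases Nat.eq_or_lt_of_le hs with rfl | h
      · rfl
      · exact le_trans (ih (le_trans (Nat.le_succ t) ht) s (Nat.lt_succ_iff.mp h) i)
          (hstep t (lt_of_lt_of_le (Nat.lt_succ_self t) ht) i)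
  -- closeness of xbar to xs, and retracted iterate below xs
  have hclose : ∀ t < T,
      ((xbar (t+1) - xs (t+1)) ⬝ᵥ (xbar (t+1) - xs (t+1))) ≤ δ t ^ 2 ∧
      ∀ i, x (t+1) i ≤ xs (t+1) i := by
    intro t ht
    have ht1 : t + 1 ≤ T := ht
    have hxb := hxbar t ht
    have hfo' := hfo (t+1) ht1 (xbar (t+1)) hxb.1
    have hexp := quad_expand Q hQsymm b (xs (t+1)) (xbar (t+1))
    have hlow' := hlow (xbar (t+1) - xs (t+1))
    have hdd : α * ((xbar (t+1) - xs (t+1)) ⬝ᵥ (xbar (t+1) - xs (t+1))) ≤ 2 * εhat t := by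
      have h2 := hxb.2
      linarith [hfo', hexp, hlow', h2]
    have hkn : (0:ℝ) ≤ ((S (t+1)).card : ℝ) := Nat.cast_nonneg _
    have hpos : (0:ℝ) < (1 + ((S (t+1)).card : ℝ)) * L ^ 2 := by
      have h1 : (0:ℝ) < 1 + ((S (t+1)).card : ℝ) := by linarith
      exact mul_pos h1 (by positivity)
    have hδsq : δ t ^ 2 = ε * α / ((1 + ((S (t+1)).card : ℝ)) * L ^ 2) := by
      rw [hδ t]
      exact Real.sq_sqrt (le_of_lt (div_pos (by positivity) hpos))
    have hδnn : 0 ≤ δ t := by rw [hδ t]; exact Real.sqrt_nonneg _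
    have heps : 2 * εhat t / α = δ t ^ 2 := by
      rw [hεhat t, hδsq]
      field_simp
    have hD : ((xbar (t+1) - xs (t+1)) ⬝ᵥ (xbar (t+1) - xs (t+1))) ≤ δ t ^ 2 := by
      rw [← heps]
      rw [le_div_iff₀ hα]
      linarith [hdd]
    refine ⟨hD, fun i => ?_⟩
    have hsingle : (xbar (t+1) - xs (t+1)) i * (xbar (t+1) - xs (t+1)) i
        ≤ ((xbar (t+1) - xs (t+1)) ⬝ᵥ (xbar (t+1) - xs (t+1))) :=
      Finset.single_le_sum (f := fun j => (xbar (t+1) - xs (t+1)) j * (xbar (t+1) - xs (t+1)) j)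
        (fun j _ => mul_self_nonneg _) (Finset.mem_univ i)
    simp only [Pi.sub_apply] at hsingle
    have hble : xbar (t+1) i - δ t ≤ xs (t+1) i := by nlinarith [hsingle, hD, hδnn]
    rw [hxsucc t ht i]
    exact max_le ((hxs (t+1) ht1).1.1 i) (by linarith)
  -- x is nonnegative and below xstar
  have hxnn : ∀ t, t ≤ T → ∀ i, 0 ≤ x t i := by
    intro t ht i
    cases t with
    | zero => rw [hx0]; exact le_rfl
    | succ s =>
      rw [hxsucc s ht i]
      exact le_max_left _ _
  have hxlestar : ∀ t, t ≤ T → ∀ i, x t i ≤ xstar i := by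
    intro t ht i
    cases t with
    | zero => rw [hx0]; exact hxstarmem i
    | succ s =>
      exact le_trans ((hclose s ht).2 i)
        (le_trans (hchain T le_rfl (s+1) ht i) (hlast i))
  -- support positivity
  have hsupp : ∀ t, t ≤ T + 1 → ∀ i ∈ S t, 0 < xstar i := by
    intro t
    induction t with
    | zero =>
      intro _ i hi
      rw [hS0] at hi
      exact absurd hi (Finset.notMem_empty i)
    | succ t ih =>
      intro ht i hi
      have htT : t ≤ T := Nat.succ_le_succ_iff.mp ht
      rw [hSsucc t htT] at hi
      rcases Finset.mem_union.mp hi with hi | hi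
      · exact ih (le_trans htT (Nat.le_succ T)) i hi
      · have hgrad : (Q.mulVec (x t) - b) i < 0 := (Finset.mem_filter.mp hi).2
        rcases lt_or_eq_of_le (hxstarmem i) with h | h
        · exact h
        · exfalso
          have hdnn : ∀ j, 0 ≤ xstar j - x t j := fun j => by
            linarith [hxlestar t htT j]
          have hdi : xstar i - x t i ≤ 0 := by
            rw [← h]
            linarith [hxnn t htT i]
          have hQii : 0 ≤ Q i i := by
            have h1 := hlow (fun j => if j = i then (1:ℝ) else 0)
            have h2 : (fun j => if j = i then (1:ℝ) else 0) ⬝ᵥ (fun j => if j = i then (1:ℝ) else 0) = 1 := by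
              simp [dotProduct]
            have h3 : (fun j => if j = i then (1:ℝ) else 0) ⬝ᵥ Q.mulVec (fun j => if j = i then (1:ℝ) else 0) = Q i i := by
              simp [dotProduct, Matrix.mulVec]
            rw [h2, h3] at h1
            linarith
          have hQd : (Q.mulVec (xstar - x t)) i ≤ 0 := by
            have : (Q.mulVec (xstar - x t)) i = ∑ j, Q i j * (xstar j - x t j) := by
              simp [Matrix.mulVec, dotProduct]
            rw [this]
            apply Finset.sum_nonpos
            intro j _
            rcases eq_or_ne j i with rfl | hj
            · exact mul_nonpos_of_nonneg_of_nonpos hQii hdi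
            · exact mul_nonpos_of_nonpos_of_nonneg (hM i j (fun hh => hj hh.symm)) (hdnn j)
          have hsg := hgradstar i
          have hsplit : (Q.mulVec xstar - b) i
              = (Q.mulVec (x t) - b) i + (Q.mulVec (xstar - x t)) i := by
            simp [Matrix.mulVec_sub, Pi.sub_apply]
          linarith [hsg, hsplit, hgrad, hQd]
  -- final suboptimality bound
  have hfinal : quadObj Q b (x T) - quadObj Q b xstar ≤ ε := by
    rcases Nat.eq_zero_or_pos T with hT0 | hTpos
    · subst hT0
      have hterm0 : ∀ i, 0 ≤ (Q.mulVec (x 0) - b) i := by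
        intro i
        by_contra hcon
        push_neg at hcon
        have hm : i ∈ S 1 := by
          rw [hSsucc 0 le_rfl]
          exact Finset.mem_union.mpr (Or.inr (Finset.mem_filter.mpr ⟨Finset.mem_univ i, hcon⟩))
        rw [hTfirst.1, hS0] at hm
        exact absurd hm (Finset.notMem_empty i)
      have hexp0 := quad_expand Q hQsymm b (x 0) xstar
      have hdot0 : 0 ≤ (Q.mulVec (x 0) - b) ⬝ᵥ (xstar - x 0) :=
        Finset.sum_nonneg fun i _ => mul_nonneg (hterm0 i)
          (by simp only [Pi.sub_apply, hx0, Pi.zero_apply, sub_zero]; exact hxstarmem i)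
      have hq0 := hpsd (xstar - x 0)
      linarith [hexp0, hdot0, hq0, hε]
    · obtain ⟨T', rfl⟩ := Nat.exists_eq_succ_of_ne_zero (Nat.pos_iff_ne_zero.mp hTpos)
      have hT'lt : T' < T' + 1 := Nat.lt_succ_self _
      have hxb := hxbar T' hT'lt
      have hkn : (0:ℝ) ≤ ((S (T'+1)).card : ℝ) := Nat.cast_nonneg _
      have hpos : (0:ℝ) < (1 + ((S (T'+1)).card : ℝ)) * L ^ 2 := by
        have h1 : (0:ℝ) < 1 + ((S (T'+1)).card : ℝ) := by linarith
        exact mul_pos h1 (by positivity)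
      have hδsq : δ T' ^ 2 = ε * α / ((1 + ((S (T'+1)).card : ℝ)) * L ^ 2) := by
        rw [hδ T']
        exact Real.sq_sqrt (le_of_lt (div_pos (by positivity) hpos))
      have hδnn : 0 ≤ δ T' := by rw [hδ T']; exact Real.sqrt_nonneg _
      -- termination: all negative-gradient coordinates are in S (T'+1)
      have hterm : ∀ i, (Q.mulVec (x (T'+1)) - b) i < 0 → i ∈ S (T'+1) := by
        intro i hi
        have hm : i ∈ S (T'+1+1) := by
          rw [hSsucc (T'+1) le_rfl]
          exact Finset.mem_union.mpr (Or.inr (Finset.mem_filter.mpr ⟨Finset.mem_univ i, hi⟩))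
        rwa [hTfirst.1] at hm
      -- bound on the xbar - x difference
      have hcc : (xbar (T'+1) - x (T'+1)) ⬝ᵥ (xbar (T'+1) - x (T'+1))
          ≤ ((S (T'+1)).card : ℝ) * δ T' ^ 2 := by
        have hbnd : ∀ i, (xbar (T'+1) - x (T'+1)) i * (xbar (T'+1) - x (T'+1)) i
            ≤ if i ∈ S (T'+1) then δ T' ^ 2 else 0 := by
          intro i
          have h1 : x (T'+1) i = max 0 (xbar (T'+1) i - δ T') := hxsucc T' hT'lt i
          by_cases hiS : i ∈ S (T'+1)
          · simp only [hiS, if_true, Pi.sub_apply]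
            have h2 : xbar (T'+1) i - δ T' ≤ x (T'+1) i := h1 ▸ le_max_right _ _
            have h3 : x (T'+1) i ≤ xbar (T'+1) i := by
              rw [h1]
              exact max_le (hxb.1.1 i) (by linarith)
            nlinarith [h2, h3, hδnn]
          · simp only [hiS, if_false, Pi.sub_apply]
            have h0 : xbar (T'+1) i = 0 := hxb.1.2 i hiS
            have h4 : x (T'+1) i = 0 := by
              rw [h1, h0]
              exact max_eq_left (by linarith)
            rw [h0, h4]
            norm_num
        calc (xbar (T'+1) - x (T'+1)) ⬝ᵥ (xbar (T'+1) - x (T'+1))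
            = ∑ i, (xbar (T'+1) - x (T'+1)) i * (xbar (T'+1) - x (T'+1)) i := rfl
          _ ≤ ∑ i, (if i ∈ S (T'+1) then δ T' ^ 2 else 0) :=
              Finset.sum_le_sum (fun i _ => hbnd i)
          _ = ∑ _i ∈ S (T'+1), δ T' ^ 2 := by
              rw [Finset.sum_ite_mem, Finset.univ_inter]
          _ = ((S (T'+1)).card : ℝ) * δ T' ^ 2 := by
              rw [Finset.sum_const, nsmul_eq_mul]
      -- bound on xs - x
      have haa := (hclose T' hT'lt).1
      have huu : (xs (T'+1) - x (T'+1)) ⬝ᵥ (xs (T'+1) - x (T'+1))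
          ≤ 2 * (1 + ((S (T'+1)).card : ℝ)) * δ T' ^ 2 := by
        have hsum : ∀ i, (xs (T'+1) - x (T'+1)) i * (xs (T'+1) - x (T'+1)) i
            ≤ 2 * ((xbar (T'+1) - xs (T'+1)) i * (xbar (T'+1) - xs (T'+1)) i)
              + 2 * ((xbar (T'+1) - x (T'+1)) i * (xbar (T'+1) - x (T'+1)) i) := by
          intro i
          simp only [Pi.sub_apply]
          nlinarith [sq_nonneg (xbar (T'+1) i - xs (T'+1) i + (xbar (T'+1) i - x (T'+1) i))]
        calc (xs (T'+1) - x (T'+1)) ⬝ᵥ (xs (T'+1) - x (T'+1))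
            = ∑ i, (xs (T'+1) - x (T'+1)) i * (xs (T'+1) - x (T'+1)) i := rfl
          _ ≤ ∑ i, (2 * ((xbar (T'+1) - xs (T'+1)) i * (xbar (T'+1) - xs (T'+1)) i)
              + 2 * ((xbar (T'+1) - x (T'+1)) i * (xbar (T'+1) - x (T'+1)) i)) :=
              Finset.sum_le_sum (fun i _ => hsum i)
          _ = 2 * ((xbar (T'+1) - xs (T'+1)) ⬝ᵥ (xbar (T'+1) - xs (T'+1)))
              + 2 * ((xbar (T'+1) - x (T'+1)) ⬝ᵥ (xbar (T'+1) - x (T'+1))) := by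
              rw [Finset.sum_add_distrib, ← Finset.mul_sum, ← Finset.mul_sum]
              rfl
          _ ≤ 2 * (δ T' ^ 2) + 2 * (((S (T'+1)).card : ℝ) * δ T' ^ 2) := by
              have := haa
              have := hcc
              linarith
          _ = 2 * (1 + ((S (T'+1)).card : ℝ)) * δ T' ^ 2 := by ring
      -- the negative-part vector of the gradient at x T
      set v : Fin n → ℝ := fun i => max 0 (-(Q.mulVec (x (T'+1)) - b) i) with hv
      have hvnn : ∀ i, 0 ≤ v i := fun i => le_max_left _ _
      have hvle : ∀ i, -(Q.mulVec (x (T'+1)) - b) i ≤ v i := fun i => le_max_right _ _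
      have hvsq : ∀ i, v i * v i
          ≤ (Q.mulVec (xs (T'+1) - x (T'+1))) i * (Q.mulVec (xs (T'+1) - x (T'+1))) i := by
        intro i
        by_cases hiS : i ∈ S (T'+1)
        · have h1 : 0 ≤ (Q.mulVec (xs (T'+1)) - b) i := hgradxs (T'+1) le_rfl i hiS
          have h2 : (Q.mulVec (xs (T'+1)) - b) i
              = (Q.mulVec (x (T'+1)) - b) i + (Q.mulVec (xs (T'+1) - x (T'+1))) i := by
            simp [Matrix.mulVec_sub, Pi.sub_apply]
          have h3 : -(Q.mulVec (x (T'+1)) - b) i ≤ (Q.mulVec (xs (T'+1) - x (T'+1))) i := by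
            linarith
          have h4 : v i ≤ |(Q.mulVec (xs (T'+1) - x (T'+1))) i| := by
            simp only [hv]
            exact max_le (abs_nonneg _) (le_trans h3 (le_abs_self _))
          calc v i * v i ≤ |(Q.mulVec (xs (T'+1) - x (T'+1))) i| * |(Q.mulVec (xs (T'+1) - x (T'+1))) i| :=
                mul_self_le_mul_self (hvnn i) h4
            _ = (Q.mulVec (xs (T'+1) - x (T'+1))) i * (Q.mulVec (xs (T'+1) - x (T'+1))) i :=
                abs_mul_abs_self _
        · have h5 : ¬ ((Q.mulVec (x (T'+1)) - b) i < 0) := fun h => hiS (hterm i h)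
          push_neg at h5
          have h6 : v i = 0 := by
            simp only [hv]
            exact max_eq_left (by linarith)
          rw [h6]
          simpa using mul_self_nonneg ((Q.mulVec (xs (T'+1) - x (T'+1))) i)
      have hop := opnorm_sq Q hQsymm L hL hpsd hup (xs (T'+1) - x (T'+1))
      have harith : L ^ 2 * (2 * (1 + ((S (T'+1)).card : ℝ)) * δ T' ^ 2) = 2 * ε * α := by
        rw [hδsq]
        field_simp
      have hvv : v ⬝ᵥ v ≤ 2 * ε * α := by
        calc v ⬝ᵥ v ≤ (Q.mulVec (xs (T'+1) - x (T'+1))) ⬝ᵥ (Q.mulVec (xs (T'+1) - x (T'+1))) :=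
            Finset.sum_le_sum (fun i _ => hvsq i)
          _ ≤ L ^ 2 * ((xs (T'+1) - x (T'+1)) ⬝ᵥ (xs (T'+1) - x (T'+1))) := hop
          _ ≤ L ^ 2 * (2 * (1 + ((S (T'+1)).card : ℝ)) * δ T' ^ 2) :=
            mul_le_mul_of_nonneg_left huu (sq_nonneg L)
          _ = 2 * ε * α := harith
      -- assemble
      have hddnn : ∀ i, 0 ≤ (xstar - x (T'+1)) i := fun i => by
        simp only [Pi.sub_apply]
        linarith [hxlestar (T'+1) le_rfl i]
      have hgradd : -((Q.mulVec (x (T'+1)) - b) ⬝ᵥ (xstar - x (T'+1)))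
          ≤ v ⬝ᵥ (xstar - x (T'+1)) := by
        rw [← neg_dotProduct]
        apply Finset.sum_le_sum
        intro i _
        have h1 : (-(Q.mulVec (x (T'+1)) - b)) i ≤ v i := by
          simp only [Pi.neg_apply]
          exact hvle i
        exact mul_le_mul_of_nonneg_right h1 (hddnn i)
      have hyoung : 2 * α * (v ⬝ᵥ (xstar - x (T'+1)))
          ≤ v ⬝ᵥ v + α ^ 2 * ((xstar - x (T'+1)) ⬝ᵥ (xstar - x (T'+1))) := by
        have hco : ∀ i, 2 * α * (v i * (xstar - x (T'+1)) i)
            ≤ v i * v i + α ^ 2 * ((xstar - x (T'+1)) i * (xstar - x (T'+1)) i) := by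
          intro i
          nlinarith [sq_nonneg (v i - α * (xstar - x (T'+1)) i)]
        calc 2 * α * (v ⬝ᵥ (xstar - x (T'+1)))
            = ∑ i, 2 * α * (v i * (xstar - x (T'+1)) i) := by
              rw [dotProduct, Finset.mul_sum]
          _ ≤ ∑ i, (v i * v i + α ^ 2 * ((xstar - x (T'+1)) i * (xstar - x (T'+1)) i)) :=
              Finset.sum_le_sum (fun i _ => hco i)
          _ = v ⬝ᵥ v + α ^ 2 * ((xstar - x (T'+1)) ⬝ᵥ (xstar - x (T'+1))) := by
              rw [Finset.sum_add_distrib, ← Finset.mul_sum]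
              rfl
      have hexp2 := quad_expand Q hQsymm b (x (T'+1)) xstar
      have hlowd := hlow (xstar - x (T'+1))
      have e1 : quadObj Q b (x (T'+1)) - quadObj Q b xstar
          ≤ v ⬝ᵥ (xstar - x (T'+1))
            - (α/2) * ((xstar - x (T'+1)) ⬝ᵥ (xstar - x (T'+1))) := by
        linarith [hexp2, hlowd, hgradd]
      have e2 : 2 * α * (v ⬝ᵥ (xstar - x (T'+1))
          - (α/2) * ((xstar - x (T'+1)) ⬝ᵥ (xstar - x (T'+1)))) ≤ 2 * α * ε := by
        nlinarith [hyoung, hvv]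
      have hX := mul_le_mul_of_nonneg_left e1 (show (0:ℝ) ≤ 2 * α by linarith)
      have hY : 2 * α * (quadObj Q b (x (T'+1)) - quadObj Q b xstar) ≤ 2 * α * ε :=
        le_trans hX e2
      exact (mul_le_mul_iff_right₀ (show (0:ℝ) < 2 * α by linarith)).mp hY
  refine ⟨⟨hxs0, hstep, hlast⟩, ⟨?_, ?_⟩, hfinal⟩
  · intro t ht
    exact Finset.ssubset_iff_subset_ne.mpr ⟨hSsub t ht.le, Ne.symm (hTfirst.2 t ht)⟩
  · intro i hi
    rw [hTfirst.1] at hi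
    exact hsupp T (Nat.le_succ T) i hi
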